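/- arXiv:1912.06426 — 2 statements merged into one kernel-verified Lean document; each statement's English description precedes it below -/
import Mathlib

section
/- For every square-integrable f : [0,T] → ℝ that is not almost everywhere equal to zero, γ ∫₀ᵀ f(t) ∫₀ᵗ f(s) e^{−ρ(t−s)} ds dt + η ∫₀ᵀ f(t)² dt > 0. Consequently, for any fixed admissible perturbation direction v with v' not almost everywhere zero, the map ε ↦ I(X + εv) is strictly convex. -/
/-!
With `u(t) = ∫₀ᵗ f(s) e^{-ρ(t-s)} ds` one has `u(0) = 0` and `u' = f - ρ u` a.e., so by the
fundamental theorem of calculus for absolutely continuous functions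
`∫₀ᵀ f u = ∫₀ᵀ (u' + ρ u) u = u(T)²/2 + ρ ∫₀ᵀ u² ≥ 0`; the term `η ∫₀ᵀ f²` makes the sum strictly
positive. The cost `I` is a quadratic form in the trading speed, so `ε ↦ I(X' + ε v')` is a
quadratic polynomial whose leading coefficient `I(v')` is exactly this positive quantity.
-/

open MeasureTheory Set

theorem AbsolutelyContinuousOnInterval.integral_deriv_mul_self {u : ℝ → ℝ} {a b : ℝ}
    (hu : AbsolutelyContinuousOnInterval u a b) :
    ∫ x in a..b, deriv u x * u x = (u b ^ 2 - u a ^ 2) / 2 := by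
  have h := hu.integral_deriv_mul_eq_sub hu
  simp only [mul_comm (u _) (deriv u _), ← two_mul, intervalIntegral.integral_const_mul] at h
  linarith

theorem integral_sq_pos_of_not_ae_eq_zero {α : Type*} [MeasurableSpace α] {μ : Measure α}
    {f : α → ℝ} (hf : Integrable (fun x => f x ^ 2) μ) (hf0 : ¬ f =ᵐ[μ] 0) :
    0 < ∫ x, f x ^ 2 ∂μ := by
  refine (integral_nonneg fun x => sq_nonneg (f x)).lt_of_ne fun h => hf0 ?_
  filter_upwards [(integral_eq_zero_iff_of_nonneg (fun x => sq_nonneg (f x)) hf).1 h.symm]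
    with x hx
  exact pow_eq_zero_iff two_ne_zero |>.1 hx

theorem strictConvexOn_univ_quadratic {a b c : ℝ} (hc : 0 < c) :
    StrictConvexOn ℝ univ fun ε : ℝ => a + ε * b + ε ^ 2 * c := by
  refine ⟨convex_univ, fun p _ q _ hpq s r hs hr hsr => ?_⟩
  have hgap : 0 < s * r * c * (p - q) ^ 2 := by
    have := sub_ne_zero.2 hpq
    positivity
  obtain rfl : r = 1 - s := by linarith
  simp only [smul_eq_mul]
  nlinarith [hgap]

lemma MeasureTheory.MemLp.intervalIntegrable_of_Icc {g : ℝ → ℝ} {T : ℝ}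
    (hg : MemLp g 2 (volume.restrict (Icc 0 T))) (hT : 0 ≤ T) :
    IntervalIntegrable g volume 0 T :=
  (intervalIntegrable_iff_integrableOn_Icc_of_le hT).2 (hg.integrable one_le_two)

lemma MeasureTheory.MemLp.intervalIntegrable_sq_of_Icc {g : ℝ → ℝ} {T : ℝ}
    (hg : MemLp g 2 (volume.restrict (Icc 0 T))) (hT : 0 ≤ T) :
    IntervalIntegrable (fun t => g t ^ 2) volume 0 T :=
  (intervalIntegrable_iff_integrableOn_Icc_of_le hT).2 hg.integrable_sq

noncomputable def dampedPrimitive (ρ : ℝ) (f : ℝ → ℝ) (t : ℝ) : ℝ :=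
  ∫ s in (0:ℝ)..t, f s * Real.exp (-ρ * (t - s))

namespace dampedPrimitive

variable {ρ T : ℝ} {f g : ℝ → ℝ}

lemma eq_exp_mul_primitive (ρ : ℝ) (f : ℝ → ℝ) :
    dampedPrimitive ρ f =
      fun t => Real.exp (-ρ * t) * ∫ s in (0:ℝ)..t, f s * Real.exp (ρ * s) := by
  funext t
  rw [dampedPrimitive, ← intervalIntegral.integral_const_mul]
  refine intervalIntegral.integral_congr fun s _ => ?_
  rw [show -ρ * (t - s) = -ρ * t + ρ * s by ring, Real.exp_add]
  ring

lemma absolutelyContinuousOnInterval (hf : IntervalIntegrable f volume 0 T) :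
    AbsolutelyContinuousOnInterval (dampedPrimitive ρ f) 0 T := by
  have hexp : ContDiffOn ℝ 1 (fun t => Real.exp (-ρ * t)) (uIcc 0 T) := by fun_prop
  have hg : IntervalIntegrable (fun s => f s * Real.exp (ρ * s)) volume 0 T :=
    hf.mul_continuousOn (by fun_prop)
  rw [eq_exp_mul_primitive]
  exact hexp.absolutelyContinuousOnInterval.fun_mul
    (hg.absolutelyContinuousOnInterval_intervalIntegral left_mem_uIcc)

lemma continuousOn (hf : IntervalIntegrable f volume 0 T) :
    ContinuousOn (dampedPrimitive ρ f) (uIcc 0 T) :=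
  (absolutelyContinuousOnInterval hf).continuousOn

lemma ae_hasDerivAt (hf : IntervalIntegrable f volume 0 T) :
    ∀ᵐ t, t ∈ uIcc 0 T →
      HasDerivAt (dampedPrimitive ρ f) (f t - ρ * dampedPrimitive ρ f t) t := by
  have hg : IntervalIntegrable (fun s => f s * Real.exp (ρ * s)) volume 0 T :=
    hf.mul_continuousOn (by fun_prop)
  filter_upwards [hg.ae_hasDerivAt_integral] with t ht htT
  have hG := ((hasDerivAt_id' t).const_mul (-ρ)).exp.mul (ht htT 0 left_mem_uIcc)
  have hexp : Real.exp (-ρ * t) * Real.exp (ρ * t) = 1 := by rw [← Real.exp_add]; simp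
  rw [eq_exp_mul_primitive]
  exact hG.congr_deriv (by linear_combination (f t) * hexp)

lemma integral_mul_self (hf : IntervalIntegrable f volume 0 T) :
    ∫ t in (0:ℝ)..T, f t * dampedPrimitive ρ f t =
      dampedPrimitive ρ f T ^ 2 / 2 + ρ * ∫ t in (0:ℝ)..T, dampedPrimitive ρ f t ^ 2 := by
  have hu := absolutelyContinuousOnInterval (ρ := ρ) hf
  have hu' := ae_hasDerivAt (ρ := ρ) hf
  have hu0 : dampedPrimitive ρ f 0 = 0 := by simp [dampedPrimitive]
  set u := dampedPrimitive ρ f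
  have hdu : IntervalIntegrable (fun t => deriv u t * u t) volume 0 T :=
    hu.intervalIntegrable_deriv.mul_continuousOn hu.continuousOn
  have hu2 : IntervalIntegrable (fun t => u t ^ 2) volume 0 T :=
    (hu.continuousOn.pow 2).intervalIntegrable
  calc ∫ t in (0:ℝ)..T, f t * u t
      = ∫ t in (0:ℝ)..T, (deriv u t * u t + ρ * u t ^ 2) := by
        refine intervalIntegral.integral_congr_ae ?_
        filter_upwards [hu'] with t ht htT
        rw [(ht (uIoc_subset_uIcc htT)).deriv]
        ring
    _ = u T ^ 2 / 2 + ρ * ∫ t in (0:ℝ)..T, u t ^ 2 := by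
        rw [intervalIntegral.integral_add hdu (hu2.const_mul ρ),
          intervalIntegral.integral_const_mul, hu.integral_deriv_mul_self, hu0]
        ring

lemma integral_mul_self_nonneg (hT : 0 ≤ T) (hρ : 0 ≤ ρ)
    (hf : IntervalIntegrable f volume 0 T) :
    0 ≤ ∫ t in (0:ℝ)..T, f t * dampedPrimitive ρ f t := by
  rw [integral_mul_self hf]
  have : 0 ≤ ∫ t in (0:ℝ)..T, dampedPrimitive ρ f t ^ 2 :=
    intervalIntegral.integral_nonneg hT fun t _ => sq_nonneg _
  positivity

lemma add_const_mul_apply (hf : IntervalIntegrable f volume 0 T)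
    (hg : IntervalIntegrable g volume 0 T) (c : ℝ) {t : ℝ} (ht : t ∈ uIcc 0 T) :
    dampedPrimitive ρ (fun s => f s + c * g s) t =
      dampedPrimitive ρ f t + c * dampedPrimitive ρ g t := by
  have hsub : uIcc 0 t ⊆ uIcc 0 T := uIcc_subset_uIcc left_mem_uIcc ht
  have hk : ContinuousOn (fun s => Real.exp (-ρ * (t - s))) (uIcc 0 t) := by fun_prop
  simp only [dampedPrimitive, add_mul, mul_assoc]
  rw [intervalIntegral.integral_add ((hf.mono_set hsub).mul_continuousOn hk)
      (((hg.mono_set hsub).mul_continuousOn hk).const_mul c),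
    intervalIntegral.integral_const_mul]

end dampedPrimitive

noncomputable def impactCost (γ η ρ T : ℝ) (g : ℝ → ℝ) : ℝ :=
  ∫ t in (0:ℝ)..T, (γ * g t * dampedPrimitive ρ g t + η * g t ^ 2)

section impactCost

variable {γ η ρ T : ℝ} {g x v : ℝ → ℝ}

lemma impactCost_eq (hT : 0 ≤ T) (hg : MemLp g 2 (volume.restrict (Icc 0 T))) :
    impactCost γ η ρ T g = γ * (∫ t in (0:ℝ)..T, g t * dampedPrimitive ρ g t)
      + η * ∫ t in (0:ℝ)..T, g t ^ 2 := by
  have hg1 := hg.intervalIntegrable_of_Icc hT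
  have hgu := hg1.mul_continuousOn (dampedPrimitive.continuousOn (ρ := ρ) hg1)
  rw [impactCost, ← intervalIntegral.integral_const_mul, ← intervalIntegral.integral_const_mul,
    ← intervalIntegral.integral_add (hgu.const_mul γ)
      ((hg.intervalIntegrable_sq_of_Icc hT).const_mul η)]
  simp only [mul_assoc]

lemma intervalIntegrable_impactCost_integrand (hT : 0 ≤ T)
    (hg : MemLp g 2 (volume.restrict (Icc 0 T))) :
    IntervalIntegrable (fun t => γ * g t * dampedPrimitive ρ g t + η * g t ^ 2) volume 0 T := by
  have hg1 := hg.intervalIntegrable_of_Icc hT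
  simp only [mul_assoc]
  exact ((hg1.mul_continuousOn (dampedPrimitive.continuousOn hg1)).const_mul γ).add
    ((hg.intervalIntegrable_sq_of_Icc hT).const_mul η)

lemma impactCost_pos (hT : 0 ≤ T) (hη : 0 < η) (hγ : 0 ≤ γ) (hρ : 0 ≤ ρ)
    (hg : MemLp g 2 (volume.restrict (Icc 0 T)))
    (hg0 : ¬ g =ᵐ[volume.restrict (Icc 0 T)] 0) : 0 < impactCost γ η ρ T g := by
  have hcross := dampedPrimitive.integral_mul_self_nonneg hT hρ (hg.intervalIntegrable_of_Icc hT)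
  have hsq : 0 < ∫ t in (0:ℝ)..T, g t ^ 2 := by
    rw [intervalIntegral.integral_of_le hT, ← integral_Icc_eq_integral_Ioc]
    exact integral_sq_pos_of_not_ae_eq_zero hg.integrable_sq hg0
  rw [impactCost_eq hT hg]
  positivity

/-- Polarization: the coefficient of `ε` is read off from the cost of `x + v`, so no cross term
`∫ x v` has to be integrated separately. -/
lemma impactCost_add_mul (hT : 0 ≤ T) (hx : MemLp x 2 (volume.restrict (Icc 0 T)))
    (hv : MemLp v 2 (volume.restrict (Icc 0 T))) (ε : ℝ) :
    impactCost γ η ρ T (fun t => x t + ε * v t) =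
      impactCost γ η ρ T x
        + ε * (impactCost γ η ρ T (fun t => x t + v t) - impactCost γ η ρ T x
          - impactCost γ η ρ T v)
        + ε ^ 2 * impactCost γ η ρ T v := by
  have hX := intervalIntegrable_impactCost_integrand (γ := γ) (η := η) (ρ := ρ) hT hx
  have hV := intervalIntegrable_impactCost_integrand (γ := γ) (η := η) (ρ := ρ) hT hv
  have hXV := intervalIntegrable_impactCost_integrand (γ := γ) (η := η) (ρ := ρ)
    (g := fun t => x t + v t) hT (hx.add hv)
  have hx1 := hx.intervalIntegrable_of_Icc hT
  have hv1 := hv.intervalIntegrable_of_Icc hT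
  simp only [impactCost]
  rw [← intervalIntegral.integral_sub hXV hX, ← intervalIntegral.integral_sub (hXV.sub hX) hV,
    ← intervalIntegral.integral_const_mul, ← intervalIntegral.integral_const_mul,
    ← intervalIntegral.integral_add hX (((hXV.sub hX).sub hV).const_mul ε),
    ← intervalIntegral.integral_add (hX.add (((hXV.sub hX).sub hV).const_mul ε))
      (hV.const_mul _)]
  refine intervalIntegral.integral_congr fun t ht => ?_
  have hε := dampedPrimitive.add_const_mul_apply (ρ := ρ) hx1 hv1 ε ht
  have h1 := dampedPrimitive.add_const_mul_apply (ρ := ρ) hx1 hv1 1 ht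
  simp only [one_mul] at h1
  simp only [hε, h1]
  ring

end impactCost

/-- Strict positivity of the cost quadratic form: for every square-integrable `f` on
`[0,T]` that is not a.e. zero, `γ ∫₀ᵀ f(t) ∫₀ᵗ f(s) e^{-ρ(t-s)} ds dt + η ∫₀ᵀ f(t)² dt > 0`.
Consequently, for any perturbation direction `v` with `v'` not a.e. zero, the map
`ε ↦ I(X + εv)` is strictly convex. -/
theorem stmt_9 (T η γ ρ : ℝ) (hT : 0 < T) (hη : 0 < η) (hγ : 0 < γ) (hρ : 0 < ρ)
    (I : (ℝ → ℝ) → ℝ)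
    (hI : ∀ g : ℝ → ℝ, I g = ∫ t in (0:ℝ)..T,
      (γ * g t * (∫ s in (0:ℝ)..t, g s * Real.exp (-ρ * (t - s))) + η * (g t) ^ 2)) :
    (∀ f : ℝ → ℝ, MemLp f 2 (volume.restrict (Icc 0 T)) →
      ¬ (f =ᵐ[volume.restrict (Icc 0 T)] (fun _ => 0)) →
      0 < γ * (∫ t in (0:ℝ)..T, f t * ∫ s in (0:ℝ)..t, f s * Real.exp (-ρ * (t - s))) +
        η * ∫ t in (0:ℝ)..T, (f t) ^ 2) ∧
    (∀ X' v' : ℝ → ℝ, MemLp X' 2 (volume.restrict (Icc 0 T)) →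
      MemLp v' 2 (volume.restrict (Icc 0 T)) →
      ¬ (v' =ᵐ[volume.restrict (Icc 0 T)] (fun _ => 0)) →
      StrictConvexOn ℝ Set.univ (fun ε : ℝ => I (fun t => X' t + ε * v' t))) := by
  have hpos := fun f (hf : MemLp f 2 _) hf0 => impactCost_pos hT.le hη hγ.le hρ.le hf hf0
  have hIc : I = impactCost γ η ρ T := funext hI
  refine ⟨fun f hf hf0 => impactCost_eq hT.le hf ▸ hpos f hf hf0, fun X' v' hX hv hv0 => ?_⟩
  simp only [hIc, impactCost_add_mul hT.le hX hv]
  exact strictConvexOn_univ_quadratic (hpos v' hv hv0)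
end

section
/- Boundary conditions from the integral equation: let z : [0,T] → ℝ be continuous and suppose there is a constant c₀ with (γ/(2η)) ∫₀ᵀ z(s) e^{−ρ|t−s|} ds + z(t) = c₀ for all t ∈ [0,T]. Then z is differentiable at 0 and at T with z'(0) = −ρ (c₀ − z(0)) and z'(T) = ρ (c₀ − z(T)). -/
/-!
Splitting the kernel at `s = t` writes `F t := ∫₀ᵀ z(s) e^{-ρ|t-s|} ds` as
`e^{-ρt} ∫₀ᵗ z(s) e^{ρs} ds + e^{ρt} ∫ₜᵀ z(s) e^{-ρs} ds`. When this is differentiated, the two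
terms `± z t` coming from the variable limits cancel, leaving
`F' t = ρ (e^{ρt} ∫ₜᵀ z(s) e^{-ρs} ds - e^{-ρt} ∫₀ᵗ z(s) e^{ρs} ds)`. One of the two integrals
vanishes at each endpoint, so `F' 0 = ρ F 0` and `F' T = -ρ F T`, and the boundary conditions
follow from `z = c₀ - (γ/(2η)) F` on `[0,T]`.
-/

open Set Real intervalIntegral
open MeasureTheory (volume)

section

variable {f z : ℝ → ℝ} {a b t ρ : ℝ}

theorem ContinuousOn.hasDerivWithinAt_integral_Icc (hf : ContinuousOn f (Icc a b))
    (ht : t ∈ Icc a b) : HasDerivWithinAt (fun u => ∫ s in a..u, f s) (f t) (Icc a b) t := by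
  have : Fact (t ∈ Icc a b) := ⟨ht⟩
  exact integral_hasDerivWithinAt_right
    (hf.mono (uIcc_subset_Icc (left_mem_Icc.2 (ht.1.trans ht.2)) ht)).intervalIntegrable
    (hf.stronglyMeasurableAtFilter_nhdsWithin measurableSet_Icc t) (hf t ht)

theorem integral_mul_exp_neg_abs_sub (hz : ContinuousOn z (Icc a b)) (ht : t ∈ Icc a b) :
    ∫ s in a..b, z s * exp (-ρ * |t - s|) =
      exp (-ρ * t) * (∫ s in a..t, z s * exp (ρ * s)) +
        exp (ρ * t) * ∫ s in t..b, z s * exp (-ρ * s) := by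
  have hint : ∀ u ∈ Icc a b, ∀ v ∈ Icc a b,
      IntervalIntegrable (fun s => z s * exp (-ρ * |t - s|)) volume u v := fun u hu v hv =>
    ((hz.mul (by fun_prop)).mono (uIcc_subset_Icc hu hv)).intervalIntegrable
  have ha : a ∈ Icc a b := left_mem_Icc.2 (ht.1.trans ht.2)
  have hb : b ∈ Icc a b := right_mem_Icc.2 (ht.1.trans ht.2)
  rw [← integral_add_adjacent_intervals (hint a ha t ht) (hint t ht b hb),
    ← integral_const_mul, ← integral_const_mul]
  congr 1 <;> refine integral_congr fun s hs => ?_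
  · rw [uIcc_of_le ht.1] at hs
    simp only [abs_of_nonneg (sub_nonneg.2 hs.2), mul_left_comm _ (z s), ← exp_add]
    ring_nf
  · rw [uIcc_of_le ht.2] at hs
    simp only [abs_sub_comm t, abs_of_nonneg (sub_nonneg.2 hs.1), mul_left_comm _ (z s),
      ← exp_add]
    ring_nf

theorem hasDerivWithinAt_integral_mul_exp_neg_abs_sub (hz : ContinuousOn z (Icc a b))
    (ht : t ∈ Icc a b) :
    HasDerivWithinAt (fun u => ∫ s in a..b, z s * exp (-ρ * |u - s|))
      (ρ * (exp (ρ * t) * (∫ s in t..b, z s * exp (-ρ * s)) -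
        exp (-ρ * t) * ∫ s in a..t, z s * exp (ρ * s))) (Icc a b) t := by
  have hexp : ∀ c : ℝ, HasDerivAt (fun u => exp (c * u)) (c * exp (c * t)) t := fun c => by
    simpa [mul_comm] using ((hasDerivAt_id t).const_mul c).exp
  have hzexp : ContinuousOn (fun s => z s * exp (ρ * s)) (Icc a b) := hz.mul (by fun_prop)
  have hzexp_neg : ContinuousOn (fun s => z s * exp (-ρ * s)) (Icc a b) := hz.mul (by fun_prop)
  have ha : a ∈ Icc a b := left_mem_Icc.2 (ht.1.trans ht.2)
  have hb : b ∈ Icc a b := right_mem_Icc.2 (ht.1.trans ht.2)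
  have htail : ∀ u ∈ Icc a b, ∫ s in u..b, z s * exp (-ρ * s) =
      (∫ s in a..b, z s * exp (-ρ * s)) - ∫ s in a..u, z s * exp (-ρ * s) := fun u hu =>
    (integral_interval_sub_left (hzexp_neg.mono (uIcc_subset_Icc ha hb)).intervalIntegrable
      (hzexp_neg.mono (uIcc_subset_Icc ha hu)).intervalIntegrable).symm
  have hderiv := ((hexp (-ρ)).hasDerivWithinAt.mul (hzexp.hasDerivWithinAt_integral_Icc ht)).add
    ((hexp ρ).hasDerivWithinAt.mul
      ((hzexp_neg.hasDerivWithinAt_integral_Icc ht).const_sub (∫ s in a..b, z s * exp (-ρ * s))))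
  refine (hderiv.congr (fun u hu => ?_) ?_).congr_deriv ?_
  · rw [integral_mul_exp_neg_abs_sub hz hu, htail u hu]; rfl
  · rw [integral_mul_exp_neg_abs_sub hz ht, htail t ht]; rfl
  · rw [htail t ht]
    ring

theorem hasDerivWithinAt_integral_mul_exp_neg_abs_sub_left (hz : ContinuousOn z (Icc a b))
    (hab : a ≤ b) :
    HasDerivWithinAt (fun u => ∫ s in a..b, z s * exp (-ρ * |u - s|))
      (ρ * ∫ s in a..b, z s * exp (-ρ * |a - s|)) (Icc a b) a := by
  have ha : a ∈ Icc a b := left_mem_Icc.2 hab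
  convert hasDerivWithinAt_integral_mul_exp_neg_abs_sub hz ha using 1
  rw [integral_mul_exp_neg_abs_sub hz ha, integral_same]
  ring

theorem hasDerivWithinAt_integral_mul_exp_neg_abs_sub_right (hz : ContinuousOn z (Icc a b))
    (hab : a ≤ b) :
    HasDerivWithinAt (fun u => ∫ s in a..b, z s * exp (-ρ * |u - s|))
      (-(ρ * ∫ s in a..b, z s * exp (-ρ * |b - s|))) (Icc a b) b := by
  have hb : b ∈ Icc a b := right_mem_Icc.2 hab
  convert hasDerivWithinAt_integral_mul_exp_neg_abs_sub hz hb using 1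
  rw [integral_mul_exp_neg_abs_sub hz hb, integral_same]
  ring

end

theorem stmt_14_general (T η γ ρ : ℝ) (hT : 0 < T)
    (z : ℝ → ℝ) (hz : ContinuousOn z (Icc 0 T)) (c₀ : ℝ)
    (heq : ∀ t ∈ Icc (0:ℝ) T,
      γ / (2 * η) * (∫ s in (0:ℝ)..T, z s * Real.exp (-ρ * |t - s|)) + z t = c₀) :
    HasDerivWithinAt z (-(ρ * (c₀ - z 0))) (Icc 0 T) 0 ∧
    HasDerivWithinAt z (ρ * (c₀ - z T)) (Icc 0 T) T := by
  have hz_eq : EqOn z (fun t => c₀ - γ / (2 * η) * ∫ s in (0:ℝ)..T, z s * exp (-ρ * |t - s|))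
      (Icc 0 T) := fun t ht => eq_sub_of_add_eq' (heq t ht)
  have h0 : (0:ℝ) ∈ Icc 0 T := left_mem_Icc.2 hT.le
  have hT' : T ∈ Icc 0 T := right_mem_Icc.2 hT.le
  constructor
  · refine ((((hasDerivWithinAt_integral_mul_exp_neg_abs_sub_left hz hT.le).const_mul
      (γ / (2 * η))).const_sub c₀).congr hz_eq (hz_eq h0)).congr_deriv ?_
    rw [hz_eq h0]
    ring
  · refine ((((hasDerivWithinAt_integral_mul_exp_neg_abs_sub_right hz hT.le).const_mul
      (γ / (2 * η))).const_sub c₀).congr hz_eq (hz_eq hT')).congr_deriv ?_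
    rw [hz_eq hT']
    ring

/-- Boundary conditions from the integral equation: if a continuous `z : [0,T] → ℝ` satisfies
`(γ/(2η)) ∫₀ᵀ z(s) e^{-ρ|t-s|} ds + z(t) = c₀` on `[0,T]`, then `z` is differentiable at `0`
and at `T` (within `[0,T]`) with `z'(0) = -ρ(c₀ - z(0))` and `z'(T) = ρ(c₀ - z(T))`. -/
theorem stmt_14 (T η γ ρ : ℝ) (hT : 0 < T) (hη : 0 < η) (hγ : 0 < γ) (hρ : 0 < ρ)
    (z : ℝ → ℝ) (hz : ContinuousOn z (Icc 0 T)) (c₀ : ℝ)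
    (heq : ∀ t ∈ Icc (0:ℝ) T,
      γ / (2 * η) * (∫ s in (0:ℝ)..T, z s * Real.exp (-ρ * |t - s|)) + z t = c₀) :
    HasDerivWithinAt z (-(ρ * (c₀ - z 0))) (Icc 0 T) 0 ∧
    HasDerivWithinAt z (ρ * (c₀ - z T)) (Icc 0 T) T :=
  stmt_14_general T η γ ρ hT z hz c₀ heq
end
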